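/- arXiv:math/0607419 — 3 statements merged into one kernel-verified Lean document; each statement's English description precedes it below -/
import Mathlib

section
/- Let p be a prime, a ≠ b two distinct letters, and α, β positive integers. The element a^α b^β − b^β a^α of (ℤ/pℤ)⟨A⟩ is primitive for the unshuffle coproduct if and only if α and β are both powers of p. -/
/-! Since `unshuffle` is multiplicative, `c(xⁿ) = (x ⊗ 1 + 1 ⊗ x)ⁿ = ∑ (n choose i) xⁱ ⊗ xⁿ⁻ⁱ`.
If `α` and `β` are powers of `p`, all middle binomial coefficients vanish mod `p`, so `a^α`
and `b^β` are primitive, hence so is their commutator. Conversely, for `0 < i < α` the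
coefficient of `aⁱ ⊗ a^(α-i) b^β` is `(α choose i)` in `c(a^α b^β)`, `0` in `c(b^β a^α)`, and
`0` in `P ⊗ 1 + 1 ⊗ P` (both tensor factors are nonempty words); so `p ∣ (α choose i)` for all
`0 < i < α`, which by Lucas' theorem forces `α` to be a power of `p`. The case of `β` follows
by swapping the letters. -/

open TensorProduct

/-- The unshuffle coproduct on the monoid algebra of the free monoid (= `K⟨A⟩`):
the unique algebra morphism (for the concatenation product) sending each letter `a`
to `a ⊗ 1 + 1 ⊗ a`. -/
noncomputable def unshuffle (K A : Type*) [CommSemiring K] :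
    MonoidAlgebra K (FreeMonoid A) →ₐ[K]
      MonoidAlgebra K (FreeMonoid A) ⊗[K] MonoidAlgebra K (FreeMonoid A) :=
  MonoidAlgebra.lift K _ (FreeMonoid A)
    (FreeMonoid.lift fun a =>
      (MonoidAlgebra.of K (FreeMonoid A) (FreeMonoid.of a)) ⊗ₜ[K] 1
        + 1 ⊗ₜ[K] (MonoidAlgebra.of K (FreeMonoid A) (FreeMonoid.of a)))

/-- The word `l` viewed as an element of `K⟨A⟩`. -/
noncomputable def wd {K : Type*} {A : Type*} [CommSemiring K] (l : List A) :
    MonoidAlgebra K (FreeMonoid A) :=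
  MonoidAlgebra.of K (FreeMonoid A) (FreeMonoid.ofList l)

/-- `P` is primitive for the unshuffle coproduct: `c(P) = P ⊗ 1 + 1 ⊗ P`. -/
def IsPrimitive {K A : Type*} [CommSemiring K] (P : MonoidAlgebra K (FreeMonoid A)) : Prop :=
  unshuffle K A P = P ⊗ₜ[K] 1 + 1 ⊗ₜ[K] P

open Finset

namespace List

variable {A : Type*}

theorem replicate_append_replicate_inj {x y : A} (hxy : x ≠ y) {i j i' j' : ℕ} :
    replicate i x ++ replicate j y = replicate i' x ++ replicate j' y ↔
      i = i' ∧ j = j' := by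
  classical
  refine ⟨fun h => ⟨?_, ?_⟩, by rintro ⟨rfl, rfl⟩; rfl⟩
  · simpa [count_replicate, hxy, Ne.symm hxy] using congrArg (count x) h
  · simpa [count_replicate, hxy, Ne.symm hxy] using congrArg (count y) h

theorem replicate_append_replicate_ne_swap {x y : A} (hxy : x ≠ y) {i j : ℕ}
    (hi : i ≠ 0) (hj : j ≠ 0) :
    replicate i x ++ replicate j y ≠ replicate j y ++ replicate i x := by
  intro h
  exact hxy (by simpa [head?_append, head?_replicate, hi, hj] using congrArg head? h)

end List

namespace Algebra.TensorProduct

variable {K R : Type*} [CommSemiring K] [Semiring R] [Algebra K R]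

theorem tmul_one_add_one_tmul_pow (r : R) (n : ℕ) :
    (r ⊗ₜ[K] (1 : R) + 1 ⊗ₜ r) ^ n =
      ∑ i ∈ range (n + 1), n.choose i • ((r ^ i) ⊗ₜ[K] (r ^ (n - i))) := by
  have hc : Commute (r ⊗ₜ[K] (1 : R)) (1 ⊗ₜ r) := by
    simp only [Commute, SemiconjBy, tmul_mul_tmul, mul_one, one_mul]
  rw [hc.add_pow]
  refine sum_congr rfl fun i _ => ?_
  rw [tmul_pow, tmul_pow, one_pow, one_pow, tmul_mul_tmul, mul_one, one_mul, nsmul_eq_mul']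

theorem tmul_one_add_one_tmul_pow_of_choose {n : ℕ} (hn : 0 < n)
    (hchoose : ∀ i, 0 < i → i < n → (n.choose i : K) = 0) (r : R) :
    (r ⊗ₜ[K] (1 : R) + 1 ⊗ₜ r) ^ n = (r ^ n) ⊗ₜ[K] 1 + 1 ⊗ₜ (r ^ n) := by
  rw [tmul_one_add_one_tmul_pow, sum_eq_add_of_mem n 0 (by simp) (by simp) hn.ne']
  · simp only [Nat.choose_self, Nat.choose_zero_right, Nat.sub_self, Nat.sub_zero, pow_zero,
      one_smul]
  · intro i hi hne
    rw [← Nat.cast_smul_eq_nsmul K, hchoose i (by omega) (by grind), zero_smul]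

end Algebra.TensorProduct

section Words

variable {K A : Type*} [CommSemiring K]

theorem wd_append (l l' : List A) : wd (K := K) (l ++ l') = wd l * wd l' :=
  map_mul (MonoidAlgebra.of K (FreeMonoid A)) _ _

theorem wd_replicate (n : ℕ) (x : A) : wd (K := K) (List.replicate n x) = wd [x] ^ n := by
  induction n with
  | zero => exact map_one (MonoidAlgebra.of K (FreeMonoid A))
  | succ n ih => rw [List.replicate_succ', wd_append, ih, pow_succ]

theorem unshuffle_wd_singleton (x : A) :
    unshuffle K A (wd [x]) = wd [x] ⊗ₜ[K] 1 + 1 ⊗ₜ[K] wd [x] := by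
  rw [unshuffle, wd, MonoidAlgebra.lift_of]
  rfl

theorem unshuffle_wd_replicate (n : ℕ) (x : A) :
    unshuffle K A (wd (List.replicate n x)) =
      ∑ i ∈ range (n + 1), n.choose i •
        (wd (List.replicate i x) ⊗ₜ[K] wd (List.replicate (n - i) x)) := by
  simp only [wd_replicate, map_pow, unshuffle_wd_singleton,
    Algebra.TensorProduct.tmul_one_add_one_tmul_pow]

theorem unshuffle_wd_replicate_append (x y : A) (α β : ℕ) :
    unshuffle K A (wd (List.replicate α x ++ List.replicate β y)) =
      ∑ i ∈ range (α + 1), ∑ j ∈ range (β + 1), (α.choose i * β.choose j) •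
        (wd (List.replicate i x ++ List.replicate j y) ⊗ₜ[K]
          wd (List.replicate (α - i) x ++ List.replicate (β - j) y)) := by
  rw [wd_append, map_mul, unshuffle_wd_replicate, unshuffle_wd_replicate, sum_mul_sum]
  refine sum_congr rfl fun i _ => sum_congr rfl fun j _ => ?_
  rw [smul_mul_smul_comm, Algebra.TensorProduct.tmul_mul_tmul, ← wd_append, ← wd_append]

end Words

section Coefficients

variable {K A : Type*} [CommSemiring K]

noncomputable def tensorCoeff (u v : List A) :
    MonoidAlgebra K (FreeMonoid A) ⊗[K] MonoidAlgebra K (FreeMonoid A) →ₗ[K] K :=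
  ((MonoidAlgebra.basis (FreeMonoid A) K).tensorProduct
    (MonoidAlgebra.basis (FreeMonoid A) K)).coord (FreeMonoid.ofList u, FreeMonoid.ofList v)

theorem tensorCoeff_tmul (u v : List A) (s t : MonoidAlgebra K (FreeMonoid A)) :
    tensorCoeff u v (s ⊗ₜ[K] t) =
      s.coeff (FreeMonoid.ofList u) * t.coeff (FreeMonoid.ofList v) := by
  rw [tensorCoeff, Module.Basis.coord_apply, Module.Basis.tensorProduct_repr_tmul_apply,
    smul_eq_mul, mul_comm]
  rfl

open scoped Classical in
theorem coeff_wd (w u : List A) :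
    (wd (K := K) w).coeff (FreeMonoid.ofList u) = if w = u then 1 else 0 := by
  simp [wd, MonoidAlgebra.of_apply, MonoidAlgebra.coeff_single, Finsupp.single_apply]

theorem coeff_one_ofList {u : List A} (hu : u ≠ []) :
    (1 : MonoidAlgebra K (FreeMonoid A)).coeff (FreeMonoid.ofList u) = 0 := by
  have h := coeff_wd (K := K) [] u
  rwa [if_neg hu.symm] at h

theorem tensorCoeff_tmul_one_add_one_tmul {u v : List A} (hu : u ≠ []) (hv : v ≠ [])
    (P : MonoidAlgebra K (FreeMonoid A)) :
    tensorCoeff u v (P ⊗ₜ[K] 1 + 1 ⊗ₜ[K] P) = 0 := by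
  rw [map_add, tensorCoeff_tmul, tensorCoeff_tmul, coeff_one_ofList hu, coeff_one_ofList hv,
    mul_zero, zero_mul, add_zero]

open scoped Classical in
theorem tensorCoeff_unshuffle_wd_replicate_append {x y : A} (hxy : x ≠ y) {α β i j : ℕ}
    (hi : i ≤ α) (hj : j ≤ β) (w : List A) :
    tensorCoeff (List.replicate i x ++ List.replicate j y) w
        (unshuffle K A (wd (List.replicate α x ++ List.replicate β y))) =
      if List.replicate (α - i) x ++ List.replicate (β - j) y = w then
        (α.choose i * β.choose j : K) else 0 := by
  simp only [unshuffle_wd_replicate_append, map_sum, map_nsmul, tensorCoeff_tmul, coeff_wd,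
    List.replicate_append_replicate_inj hxy, ite_and]
  rw [sum_eq_single_of_mem i (mem_range_succ_iff.2 hi) fun i' _ hi' => by simp [hi'],
    sum_eq_single_of_mem j (mem_range_succ_iff.2 hj) fun j' _ hj' => by simp [hj']]
  simp [nsmul_eq_mul]

end Coefficients

section Primitive

variable {K A : Type*}

theorem IsPrimitive.neg [CommRing K] {P : MonoidAlgebra K (FreeMonoid A)} (hP : IsPrimitive P) :
    IsPrimitive (-P) := by
  rw [IsPrimitive, map_neg, hP, neg_add, TensorProduct.neg_tmul, TensorProduct.tmul_neg]

theorem IsPrimitive.commutator [CommRing K] {P Q : MonoidAlgebra K (FreeMonoid A)}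
    (hP : IsPrimitive P) (hQ : IsPrimitive Q) : IsPrimitive (P * Q - Q * P) := by
  rw [IsPrimitive, map_sub, map_mul, map_mul, hP, hQ]
  simp only [add_mul, mul_add, Algebra.TensorProduct.tmul_mul_tmul, one_mul, mul_one,
    TensorProduct.sub_tmul, TensorProduct.tmul_sub]
  abel

theorem isPrimitive_wd_replicate [CommSemiring K] {n : ℕ} (hn : 0 < n)
    (hchoose : ∀ i, 0 < i → i < n → (n.choose i : K) = 0) (x : A) :
    IsPrimitive (wd (K := K) (List.replicate n x)) := by
  rw [IsPrimitive, wd_replicate, map_pow, unshuffle_wd_singleton,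
    Algebra.TensorProduct.tmul_one_add_one_tmul_pow_of_choose hn hchoose]

theorem choose_eq_zero_of_isPrimitive [CommRing K] {x y : A} (hxy : x ≠ y) {α β : ℕ}
    (hβ : 0 < β)
    (h : IsPrimitive (wd (K := K) (List.replicate α x ++ List.replicate β y)
      - wd (List.replicate β y ++ List.replicate α x)))
    {i : ℕ} (hi : 0 < i) (hiα : i < α) : (α.choose i : K) = 0 := by
  set w := List.replicate (α - i) x ++ List.replicate β y
  have hc := congrArg (tensorCoeff (List.replicate i x) w) h
  have h₁ : tensorCoeff (List.replicate i x) w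
      (unshuffle K A (wd (List.replicate α x ++ List.replicate β y))) = α.choose i := by
    simpa [w] using
      tensorCoeff_unshuffle_wd_replicate_append (K := K) hxy hiα.le (Nat.zero_le β) w
  have h₂ : tensorCoeff (List.replicate i x) w
      (unshuffle K A (wd (List.replicate β y ++ List.replicate α x))) = 0 := by
    have hswap := List.replicate_append_replicate_ne_swap (Ne.symm hxy) hβ.ne'
      (by omega : α - i ≠ 0)
    simpa [w, hswap] using
      tensorCoeff_unshuffle_wd_replicate_append (K := K) (Ne.symm hxy) (Nat.zero_le β) hiα.le w
  rwa [map_sub, map_sub, h₁, h₂, sub_zero,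
    tensorCoeff_tmul_one_add_one_tmul (by simp; omega) (by simp [w]; omega)] at hc

theorem isPrimitive_commutator_iff_choose [CommRing K] {x y : A} (hxy : x ≠ y) {α β : ℕ}
    (hα : 0 < α) (hβ : 0 < β) :
    IsPrimitive (wd (K := K) (List.replicate α x ++ List.replicate β y)
        - wd (List.replicate β y ++ List.replicate α x)) ↔
      (∀ i, 0 < i → i < α → (α.choose i : K) = 0) ∧
        (∀ j, 0 < j → j < β → (β.choose j : K) = 0) := by
  refine ⟨fun h => ⟨fun i => choose_eq_zero_of_isPrimitive hxy hβ h,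
    fun j => choose_eq_zero_of_isPrimitive (Ne.symm hxy) hα (by simpa using h.neg)⟩,
    fun ⟨hα', hβ'⟩ => ?_⟩
  rw [wd_append, wd_append]
  exact (isPrimitive_wd_replicate hα hα' x).commutator (isPrimitive_wd_replicate hβ hβ' y)

end Primitive

theorem Nat.Prime.natCast_choose_eq_zero_iff_exists_eq_pow {p n : ℕ} (hp : p.Prime)
    (hn : 0 < n) :
    (∀ i, 0 < i → i < n → (n.choose i : ZMod p) = 0) ↔ ∃ m, n = p ^ m := by
  have := Fact.mk hp
  simp only [ZMod.natCast_eq_zero_iff]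
  refine ⟨fun h => ⟨_, Choose.eq_pow_multiplicity_of_choose_modEq_zero_nat hn fun i hi => ?_⟩,
    ?_⟩
  · rw [mem_Icc] at hi
    exact Nat.modEq_zero_iff_dvd.2 (h i (by omega) (by omega))
  · rintro ⟨m, rfl⟩ i hi hin
    exact hp.dvd_choose_pow hi.ne' hin.ne

/-- over `ℤ/pℤ`, for distinct letters `a ≠ b` and `α, β ≥ 1`,
`a^α b^β − b^β a^α` is primitive iff `α` and `β` are powers of `p`. -/
theorem primitive_commutator_iff {A : Type*} (p : ℕ) (hp : p.Prime)
    (a b : A) (hab : a ≠ b) (α β : ℕ) (hα : 0 < α) (hβ : 0 < β) :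
    IsPrimitive (wd (K := ZMod p) (List.replicate α a ++ List.replicate β b)
        - wd (List.replicate β b ++ List.replicate α a)) ↔
      (∃ m : ℕ, α = p ^ m) ∧ (∃ n : ℕ, β = p ^ n) := by
  rw [isPrimitive_commutator_iff_choose hab hα hβ,
    hp.natCast_choose_eq_zero_iff_exists_eq_pow hα, hp.natCast_choose_eq_zero_iff_exists_eq_pow hβ]
end

section
/- Let p be a prime and let α, β ≥ 1. Then a^{p^α} − b^{p^β} is NOT primitive for the unshuffle coproduct over ℤ/p²ℤ unless p^α = p^β = 1; in fact over ℤ/p²ℤ, for distinct letters a, b and α, β ≥ 0, a^{p^α} − b^{p^β} is primitive if and only if α = β = 0. -/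
open TensorProduct

namespace IsPrimitive

section CommSemiring

variable {K A : Type*} [CommSemiring K]

lemma wd_singleton (a : A) : IsPrimitive (wd (K := K) [a]) := by
  rw [IsPrimitive, wd, FreeMonoid.ofList_singleton, unshuffle, MonoidAlgebra.lift_of,
    FreeMonoid.lift_eval_of]

end CommSemiring

variable {K A : Type*} [CommRing K] {P Q : MonoidAlgebra K (FreeMonoid A)}

lemma sub (hP : IsPrimitive P) (hQ : IsPrimitive Q) : IsPrimitive (P - Q) := by
  rw [IsPrimitive, map_sub, hP, hQ, sub_tmul, tmul_sub]
  abel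

lemma neg_s7 (hP : IsPrimitive P) : IsPrimitive (-P) := by
  rw [IsPrimitive, map_neg, hP, neg_add, neg_tmul, tmul_neg]

end IsPrimitive

noncomputable def evalLetters (K : Type*) {A R : Type*} [CommSemiring K] [Semiring R]
    [Algebra K R] (f : A → R) : MonoidAlgebra K (FreeMonoid A) →ₐ[K] R :=
  MonoidAlgebra.lift K R (FreeMonoid A) (FreeMonoid.lift f)

section evalLetters

variable {K A R : Type*} [CommSemiring K] [CommSemiring R] [Algebra K R]

lemma evalLetters_wd (f : A → R) (l : List A) : evalLetters K f (wd l) = (l.map f).prod := by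
  rw [evalLetters, wd, MonoidAlgebra.lift_of, FreeMonoid.lift_ofList]

lemma productMap_comp_unshuffle (f g : A → R) :
    (Algebra.TensorProduct.productMap (evalLetters K f) (evalLetters K g)).comp (unshuffle K A)
      = evalLetters K (f + g) := by
  rw [MonoidAlgebra.lift_unique' (AlgHom.comp _ _), evalLetters]
  congr 1
  refine FreeMonoid.hom_eq fun x => ?_
  simp [unshuffle, evalLetters]

lemma IsPrimitive.evalLetters_add {P : MonoidAlgebra K (FreeMonoid A)} (hP : IsPrimitive P)
    (f g : A → R) : evalLetters K (f + g) P = evalLetters K f P + evalLetters K g P := by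
  rw [← productMap_comp_unshuffle, AlgHom.comp_apply, hP]
  simp

end evalLetters

section Binomial

open scoped Polynomial
open Polynomial (X)

variable {K A : Type*} [CommRing K] {a b : A} {n m : ℕ}

lemma add_one_pow_eq_of_isPrimitive (hab : a ≠ b) (hm : m ≠ 0)
    (hP : IsPrimitive (wd (K := K) (List.replicate n a) - wd (List.replicate m b))) :
    ((X + 1) ^ n : K[X]) = X ^ n + 1 := by
  classical
  have h := hP.evalLetters_add (Pi.single a (X : K[X])) (Pi.single a 1)
  simpa [← Pi.single_add, evalLetters_wd, Pi.single_eq_of_ne hab.symm, hm] using h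

lemma choose_eq_zero_of_isPrimitive_s7 (hab : a ≠ b) (hm : m ≠ 0)
    (hP : IsPrimitive (wd (K := K) (List.replicate n a) - wd (List.replicate m b)))
    {i : ℕ} (hi₀ : 0 < i) (hin : i < n) : (n.choose i : K) = 0 := by
  have h := congrArg (Polynomial.coeff · i) (add_one_pow_eq_of_isPrimitive hab hm hP)
  simpa [Polynomial.coeff_X_add_one_pow, Polynomial.coeff_X_pow, Polynomial.coeff_one, hin.ne,
    hi₀.ne'] using h

end Binomial

lemma Nat.Prime.not_sq_dvd_choose_pow_pred {p α : ℕ} (hp : p.Prime) :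
    ¬ p ^ 2 ∣ (p ^ α).choose (p ^ (α - 1)) := by
  have hle : p ^ (α - 1) ≤ p ^ α := Nat.pow_le_pow_right hp.pos (Nat.sub_le α 1)
  rw [hp.pow_dvd_iff_le_factorization (Nat.choose_pos hle).ne',
    Nat.factorization_choose_prime_pow hp hle (pow_ne_zero _ hp.ne_zero),
    hp.factorization_pow, Finsupp.single_eq_same]
  omega

lemma exponent_eq_zero_of_isPrimitive {A : Type*} {p : ℕ} (hp : p.Prime) {a b : A} (hab : a ≠ b)
    {α β : ℕ} (hP : IsPrimitive (wd (K := ZMod (p ^ 2)) (List.replicate (p ^ α) a)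
        - wd (List.replicate (p ^ β) b))) : α = 0 := by
  by_contra hα
  have h := choose_eq_zero_of_isPrimitive_s7 hab (pow_ne_zero _ hp.ne_zero) hP
    (pow_pos hp.pos (α - 1)) (Nat.pow_lt_pow_right hp.one_lt (by omega))
  exact hp.not_sq_dvd_choose_pow_pred ((ZMod.natCast_eq_zero_iff _ _).1 h)

/-- over `ℤ/p²ℤ`, for distinct letters `a ≠ b` and `α, β ≥ 0`,
`a^(p^α) − b^(p^β)` is primitive iff `α = β = 0`. -/
theorem primitive_diff_p_powers_mod_p_sq {A : Type*} (p : ℕ) (hp : p.Prime)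
    (a b : A) (hab : a ≠ b) (α β : ℕ) :
    IsPrimitive (wd (K := ZMod (p ^ 2)) (List.replicate (p ^ α) a)
        - wd (List.replicate (p ^ β) b)) ↔ α = 0 ∧ β = 0 := by
  constructor
  · intro hP
    exact ⟨exponent_eq_zero_of_isPrimitive hp hab hP,
      exponent_eq_zero_of_isPrimitive hp hab.symm (by simpa using hP.neg_s7)⟩
  · rintro ⟨rfl, rfl⟩
    exact (IsPrimitive.wd_singleton a).sub (IsPrimitive.wd_singleton b)
end

section
/- Let p be a prime, a and b distinct letters, and α, β ≥ 0. Then the monoid congruence on {a,b}* generated by the single relation a^{p^α} b^{p^β} = b^{p^β} a^{p^α} is (ℤ/pℤ)-shuffle compatible: for u = a^{p^α} b^{p^β} and v = b^{p^β} a^{p^α}, the images of c(u) and c(v) in the quotient tensor square agree. -/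
open TensorProduct

/-- The natural algebra morphism `K⟨A⟩ → K[A*/≡]` induced by a monoid congruence. -/
noncomputable def natHom (K : Type*) {A : Type*} [CommSemiring K] (c : Con (FreeMonoid A)) :
    MonoidAlgebra K (FreeMonoid A) →ₐ[K] MonoidAlgebra K c.Quotient :=
  MonoidAlgebra.mapDomainAlgHom K K c.mk'

/-- A congruence `≡` on `A*` is `K`-shuffle compatible if the unshuffle coproduct descends
to the quotient, i.e. `u ≡ v` implies `(nat ⊗ nat)(c u) = (nat ⊗ nat)(c v)`. -/
def ShuffleCompat (K : Type*) {A : Type*} [CommSemiring K] (c : Con (FreeMonoid A)) : Prop :=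
  ∀ u v : FreeMonoid A, c u v →
    (Algebra.TensorProduct.map (natHom K c) (natHom K c))
        (unshuffle K A (MonoidAlgebra.of K (FreeMonoid A) u))
      = (Algebra.TensorProduct.map (natHom K c) (natHom K c))
        (unshuffle K A (MonoidAlgebra.of K (FreeMonoid A) v))

/-!
Write `Δ z = z ⊗ 1 + 1 ⊗ z`. The coproduct of a letter is `Δ` of that letter, and in
characteristic `p` the freshman's dream gives `(Δ z) ^ p ^ n = Δ (z ^ p ^ n)`, because `z ⊗ 1` and
`1 ⊗ z` commute. So in the quotient tensor square the two sides of the relator map to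
`Δ X * Δ Y` and `Δ Y * Δ X` with `X = a ^ p ^ α` and `Y = b ^ p ^ β`. Since `X` and `Y` commute in
the quotient algebra, so do `Δ X` and `Δ Y`. Compatibility on the relators is enough, because
the kernel of a monoid morphism is a congruence.
-/

theorem FreeMonoid.ofList_replicate {A : Type*} (n : ℕ) (x : A) :
    ofList (List.replicate n x) = of x ^ n := by
  induction n with
  | zero => rfl
  | succ n ih =>
    rw [List.replicate_succ', ofList_append, ih, pow_succ]
    rfl

theorem Commute.add_pow_prime_pow_eq_of_natCast_eq_zero {R : Type*} [Semiring R] {p : ℕ}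
    (hp : p.Prime) (hR : (p : R) = 0) {x y : R} (h : Commute x y) (n : ℕ) :
    (x + y) ^ p ^ n = x ^ p ^ n + y ^ p ^ n := by
  obtain ⟨r, hr⟩ := h.exists_add_pow_prime_pow_eq hp n
  rw [hr, hR, zero_mul, zero_mul, zero_mul, add_zero]

section TensorSquare

variable {K B : Type*} [CommSemiring K] [Semiring B] [Algebra K B]

theorem Commute.tmul_one_add_one_tmul {x y : B} (h : Commute x y) :
    Commute (x ⊗ₜ[K] (1 : B) + 1 ⊗ₜ x) (y ⊗ₜ 1 + 1 ⊗ₜ y) :=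
  ((h.tmul (.refl 1)).add_right ((Commute.one_right x).tmul (Commute.one_left y))).add_left
    (((Commute.one_left y).tmul (Commute.one_right x)).add_right ((Commute.refl 1).tmul h))

theorem tmul_one_add_one_tmul_pow_prime_pow {p : ℕ} (hp : p.Prime) (hK : (p : K) = 0)
    (z : B) (n : ℕ) :
    (z ⊗ₜ[K] (1 : B) + 1 ⊗ₜ z) ^ p ^ n = (z ^ p ^ n) ⊗ₜ 1 + 1 ⊗ₜ (z ^ p ^ n) := by
  have hchar : (p : B ⊗[K] B) = 0 := by
    rw [← map_natCast (algebraMap K (B ⊗[K] B)), hK, map_zero]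
  have hcomm : Commute (z ⊗ₜ[K] (1 : B)) (1 ⊗ₜ z) :=
    (Commute.one_right z).tmul (Commute.one_left z)
  rw [hcomm.add_pow_prime_pow_eq_of_natCast_eq_zero hp hchar, Algebra.TensorProduct.tmul_pow,
    Algebra.TensorProduct.tmul_pow, one_pow]

end TensorSquare

section Quotient

variable (K : Type*) {A : Type*} [CommSemiring K]

noncomputable def quotientUnshuffle (c : Con (FreeMonoid A)) :
    MonoidAlgebra K (FreeMonoid A) →ₐ[K] MonoidAlgebra K c.Quotient ⊗[K] MonoidAlgebra K c.Quotient :=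
  (Algebra.TensorProduct.map (natHom K c) (natHom K c)).comp (unshuffle K A)

theorem quotientUnshuffle_of_of (c : Con (FreeMonoid A)) (x : A) :
    quotientUnshuffle K c (MonoidAlgebra.of K _ (FreeMonoid.of x))
      = MonoidAlgebra.of K c.Quotient (c.mk' (FreeMonoid.of x)) ⊗ₜ[K] 1
        + 1 ⊗ₜ[K] MonoidAlgebra.of K c.Quotient (c.mk' (FreeMonoid.of x)) := by
  rw [quotientUnshuffle, AlgHom.comp_apply, unshuffle, MonoidAlgebra.lift_of,
    FreeMonoid.lift_eval_of, map_add, Algebra.TensorProduct.map_tmul,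
    Algebra.TensorProduct.map_tmul, map_one, natHom, MonoidAlgebra.mapDomainAlgHom_apply]
  simp

theorem shuffleCompat_conGen {r : FreeMonoid A → FreeMonoid A → Prop}
    (h : ∀ x y, r x y → quotientUnshuffle K (conGen r) (MonoidAlgebra.of K _ x)
      = quotientUnshuffle K (conGen r) (MonoidAlgebra.of K _ y)) :
    ShuffleCompat K (conGen r) := by
  let F := (quotientUnshuffle K (conGen r)).toMonoidHom.comp (MonoidAlgebra.of K (FreeMonoid A))
  intro u v huv
  exact (Con.ker_rel F).1 (Con.conGen_le.2 (fun x y hxy => (Con.ker_rel F).2 (h x y hxy)) huv)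

end Quotient

theorem pLC_shuffle_compatible_general {A : Type*} (p : ℕ) (hp : p.Prime)
    (a b : A) (α β : ℕ) :
    ShuffleCompat (ZMod p) (conGen (fun x y : FreeMonoid A =>
      x = FreeMonoid.ofList (List.replicate (p ^ α) a ++ List.replicate (p ^ β) b) ∧
      y = FreeMonoid.ofList (List.replicate (p ^ β) b ++ List.replicate (p ^ α) a))) := by
  refine shuffleCompat_conGen _ ?_
  rintro _ _ ⟨rfl, rfl⟩
  set c : Con (FreeMonoid A) := conGen _
  set X := MonoidAlgebra.of (ZMod p) c.Quotient (c.mk' (FreeMonoid.of a))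
  set Y := MonoidAlgebra.of (ZMod p) c.Quotient (c.mk' (FreeMonoid.of b))
  have hrel := (Con.eq c).2 (ConGen.Rel.of _ _ ⟨rfl, rfl⟩)
  simp only [FreeMonoid.ofList_append, FreeMonoid.ofList_replicate, map_mul, map_pow] at hrel ⊢
  have hXY : Commute (X ^ p ^ α) (Y ^ p ^ β) := by
    simp only [Commute, SemiconjBy, X, Y, ← map_pow, ← map_mul]
    exact congrArg _ hrel
  simp only [quotientUnshuffle_of_of,
    tmul_one_add_one_tmul_pow_prime_pow hp (ZMod.natCast_self p)]
  exact hXY.tmul_one_add_one_tmul.eq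

/-- for `p` prime, distinct letters `a ≠ b` and `α, β ≥ 0`, the congruence
generated by the single relation `a^(p^α) b^(p^β) = b^(p^β) a^(p^α)` is
`ℤ/pℤ`-shuffle compatible. -/
theorem pLC_shuffle_compatible {A : Type*} (p : ℕ) (hp : p.Prime)
    (a b : A) (hab : a ≠ b) (α β : ℕ) :
    ShuffleCompat (ZMod p) (conGen (fun x y : FreeMonoid A =>
      x = FreeMonoid.ofList (List.replicate (p ^ α) a ++ List.replicate (p ^ β) b) ∧
      y = FreeMonoid.ofList (List.replicate (p ^ β) b ++ List.replicate (p ^ α) a))) :=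
  pLC_shuffle_compatible_general p hp a b α β
end
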